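/- Let α be a QCA of range R and A an l-visibly simple algebra. Then α(A) is (l + 2R)-visibly simple. -/

import Mathlib

/-!
Supports are detected by commutators: an operator is supported on `T` exactly when it
commutes with every single-site matrix unit at the sites outside `T`. If `M` is supported on
`S` and `z` is farther than `R` from `S`, then `α⁻¹` of a site operator at `z` is supported
away from `S`, hence commutes with `M`; applying `α`, the operator `α M` commutes with all
site operators at `z`. So `α` enlarges supports by at most `R`. Given `x ∈ supp (α O)`, pick
`y ∈ supp O` within `R` of `x` and the witness `P` for `(O, y)`: then `α P` is supported within
`l + R` of `y`, hence within `l + 2R` of `x`, and it does not commute with `α O`.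
-/

open Matrix

/-- A configuration of the local (computational-basis) indices of all sites. -/
abbrev Cfg {V : Type} (d : V → ℕ) := ∀ i, Fin (d i)

/-- The algebra of operators on the tensor-product Hilbert space `⊗ᵢ ℂ^{d i}`. -/
abbrev Op {V : Type} [Fintype V] [DecidableEq V] (d : V → ℕ) :=
  Matrix (Cfg d) (Cfg d) ℂ

open Classical in
/-- `M` is supported on the set of sites `S` if `M = N ⊗ Id` for some operator `N`
acting only on the tensor factors in `S`. -/
def SupportedOn {V : Type} [Fintype V] [DecidableEq V] (d : V → ℕ)
    (S : Set V) (M : Op d) : Prop :=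
  ∃ N : Matrix (∀ i : S, Fin (d i.1)) (∀ i : S, Fin (d i.1)) ℂ,
    ∀ f g : Cfg d, M f g =
      if ∀ i ∉ S, f i = g i then N (fun i => f i.1) (fun i => g i.1) else 0

/-- The (minimal) support of an operator: the set of sites belonging to every set on
which the operator is supported.  Scalars have empty support. -/
def Supp {V : Type} [Fintype V] [DecidableEq V] (d : V → ℕ) (M : Op d) : Set V :=
  {x | ∀ S : Set V, SupportedOn d S M → x ∈ S}

/-- An algebra `A` of operators is `l`-visibly simple if for every `O ∈ A` and every
site `x` in the support of `O` there is `P ∈ A` supported within distance `l` of `x`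
which does not commute with `O`. -/
def VisiblySimple {V : Type} [Fintype V] [DecidableEq V] [PseudoMetricSpace V]
    (d : V → ℕ) (l : ℝ) (A : Subalgebra ℂ (Op d)) : Prop :=
  ∀ O ∈ A, ∀ x ∈ Supp d O,
    ∃ P ∈ A, SupportedOn d (Metric.closedBall x l) P ∧ O * P ≠ P * O

/-- A QCA of range `R`: a *-automorphism of the operator algebra such that images and
preimages of single-site operators are supported within distance `R`. -/
def IsQCA {V : Type} [Fintype V] [DecidableEq V] [PseudoMetricSpace V]
    (d : V → ℕ) (R : ℝ) (α : Op d ≃ₐ[ℂ] Op d) : Prop :=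
  (∀ M : Op d, α Mᴴ = (α M)ᴴ) ∧
  ∀ (x : V) (M : Op d), SupportedOn d {x} M →
    SupportedOn d (Metric.closedBall x R) (α M) ∧
    SupportedOn d (Metric.closedBall x R) (α.symm M)

section

variable {V : Type} [Fintype V] [DecidableEq V] {d : V → ℕ}

/-- The matrix unit `|a⟩⟨b|` on the factor at site `x`, tensored with the identity. -/
noncomputable def siteUnit (d : V → ℕ) (x : V) (a b : Fin (d x)) : Op d :=
  Matrix.of fun f g : Cfg d =>
    if f x = a ∧ g x = b ∧ ∀ j, j ≠ x → f j = g j then (1 : ℂ) else 0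

lemma siteUnit_apply_eq_ite_left (x : V) (a b : Fin (d x)) (f g : Cfg d) :
    siteUnit d x a b f g = if f = Function.update g x a ∧ g x = b then 1 else 0 := by
  simp only [siteUnit, of_apply, Function.eq_update_iff]
  congr 1
  exact propext ⟨fun ⟨ha, hb, h⟩ => ⟨⟨ha, h⟩, hb⟩, fun ⟨⟨ha, h⟩, hb⟩ => ⟨ha, hb, h⟩⟩

lemma siteUnit_apply_eq_ite_right (x : V) (a b : Fin (d x)) (f g : Cfg d) :
    siteUnit d x a b f g = if g = Function.update f x b ∧ f x = a then 1 else 0 := by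
  simp only [siteUnit, of_apply, Function.eq_update_iff]
  congr 1
  exact propext ⟨fun ⟨ha, hb, h⟩ => ⟨⟨hb, fun j hj => (h j hj).symm⟩, ha⟩,
    fun ⟨⟨hb, h⟩, ha⟩ => ⟨ha, hb, fun j hj => (h j hj).symm⟩⟩

lemma mul_siteUnit_apply (M : Op d) (x : V) (a b : Fin (d x)) (f g : Cfg d) :
    (M * siteUnit d x a b) f g = if g x = b then M f (Function.update g x a) else 0 := by
  simp [Matrix.mul_apply, siteUnit_apply_eq_ite_left, ite_and]

lemma siteUnit_mul_apply (M : Op d) (x : V) (a b : Fin (d x)) (f g : Cfg d) :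
    (siteUnit d x a b * M) f g = if f x = a then M (Function.update f x b) g else 0 := by
  simp [Matrix.mul_apply, siteUnit_apply_eq_ite_right, ite_and]

lemma supportedOn_singleton_siteUnit (x : V) (a b : Fin (d x)) :
    SupportedOn d {x} (siteUnit d x a b) := by
  refine ⟨Matrix.of fun u v => if u ⟨x, rfl⟩ = a ∧ v ⟨x, rfl⟩ = b then 1 else 0,
    fun f g => ?_⟩
  simp only [siteUnit, of_apply, Set.mem_singleton_iff]
  split_ifs <;> tauto

open Classical in
lemma mul_apply_of_disjoint {S S' : Set V} (hSS' : Disjoint S S') {M P : Op d}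
    {N : Matrix (∀ i : S, Fin (d i.1)) (∀ i : S, Fin (d i.1)) ℂ}
    {N' : Matrix (∀ i : S', Fin (d i.1)) (∀ i : S', Fin (d i.1)) ℂ}
    (hM : ∀ f g : Cfg d, M f g =
      if ∀ i ∉ S, f i = g i then N (fun i => f i.1) (fun i => g i.1) else 0)
    (hP : ∀ f g : Cfg d, P f g =
      if ∀ i ∉ S', f i = g i then N' (fun i => f i.1) (fun i => g i.1) else 0)
    (f g : Cfg d) :
    (M * P) f g = if ∀ i ∉ S ∪ S', f i = g i
      then N (fun i => f i.1) (fun i => g i.1) * N' (fun i => f i.1) (fun i => g i.1)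
      else 0 := by
  -- only the configuration that follows `g` on `S` and `f` elsewhere contributes
  set h₀ : Cfg d := fun i => if i ∈ S then g i else f i
  have hS' : ∀ i ∈ S', i ∉ S := fun i hi hiS => Set.disjoint_left.mp hSS' hiS hi
  rw [Matrix.mul_apply, Finset.sum_eq_single h₀ ?_ (by simp)]
  · have h₀_S : (fun i : S => h₀ i.1) = fun i : S => g i.1 := funext fun i : S => if_pos i.2
    have h₀_S' : (fun i : S' => h₀ i.1) = fun i : S' => f i.1 :=
      funext fun i : S' => if_neg (hS' i.1 i.2)
    have hcond : (∀ i ∉ S', h₀ i = g i) ↔ ∀ i ∉ S ∪ S', f i = g i := by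
      simp only [h₀, Set.mem_union, not_or]
      refine ⟨fun h i hi => by simpa [hi.1] using h i hi.2, fun h i hi => ?_⟩
      by_cases hiS : i ∈ S
      · simp [hiS]
      · simp [hiS, h i ⟨hiS, hi⟩]
    rw [hM, hP, if_pos fun i hi => by simp [h₀, hi], h₀_S, h₀_S']
    by_cases hc : ∀ i ∉ S ∪ S', f i = g i
    · rw [if_pos (hcond.mpr hc), if_pos hc]
    · rw [if_neg (mt hcond.mp hc), if_neg hc, mul_zero]
  · intro h _ hne
    rw [hM, hP]
    split_ifs with hfh hhg
    · refine absurd (funext fun i => ?_) hne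
      by_cases hiS : i ∈ S
      · simp [h₀, hiS, hhg i (fun hi => hS' i hi hiS)]
      · simp [h₀, hiS, hfh i hiS]
    all_goals simp

lemma SupportedOn.commute_of_disjoint {S S' : Set V} {M P : Op d}
    (hM : SupportedOn d S M) (hP : SupportedOn d S' P) (hSS' : Disjoint S S') :
    Commute M P := by
  obtain ⟨N, hN⟩ := hM
  obtain ⟨N', hN'⟩ := hP
  ext f g
  rw [mul_apply_of_disjoint hSS' hN hN', mul_apply_of_disjoint hSS'.symm hN' hN]
  by_cases hc : ∀ i ∉ S ∪ S', f i = g i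
  · rw [if_pos hc, if_pos (by rwa [Set.union_comm]), mul_comm]
  · rw [if_neg hc, if_neg (by rwa [Set.union_comm])]

lemma apply_eq_zero_of_commute_siteUnit {M : Op d} {x : V}
    (hx : ∀ a b, Commute M (siteUnit d x a b)) {f g : Cfg d} (hfg : f x ≠ g x) :
    M f g = 0 := by
  have h := congrFun (congrFun (hx (g x) (g x)) f) g
  rwa [mul_siteUnit_apply, siteUnit_mul_apply, if_pos rfl, Function.update_eq_self,
    if_neg hfg] at h

lemma apply_update_update_of_commute_siteUnit {M : Op d} {x : V}
    (hx : ∀ a b, Commute M (siteUnit d x a b)) {f g : Cfg d} (hfg : f x = g x)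
    (c : Fin (d x)) :
    M (Function.update f x c) (Function.update g x c) = M f g := by
  have h := congrFun (congrFun (hx c (g x)) (Function.update f x c)) g
  rwa [mul_siteUnit_apply, siteUnit_mul_apply, if_pos rfl, Function.update_self, if_pos rfl,
    Function.update_idem, ← hfg, Function.update_eq_self] at h

lemma apply_piecewise_of_commute_siteUnit {M : Op d} (s : Finset V)
    (hs : ∀ x ∈ s, ∀ a b, Commute M (siteUnit d x a b)) (c : Cfg d) {f g : Cfg d}
    (hfg : ∀ x ∈ s, f x = g x) :
    M (s.piecewise c f) (s.piecewise c g) = M f g := by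
  induction s using Finset.induction_on with
  | empty => simp
  | insert x s hxs ih =>
    have hx : (s.piecewise c f) x = (s.piecewise c g) x := by
      simp [Finset.piecewise, hxs, hfg x (Finset.mem_insert_self x s)]
    rw [Finset.piecewise_insert, Finset.piecewise_insert,
      apply_update_update_of_commute_siteUnit (hs x (Finset.mem_insert_self x s)) hx,
      ih (fun y hy => hs y (Finset.mem_insert_of_mem hy))
        (fun y hy => hfg y (Finset.mem_insert_of_mem hy))]

open Classical in
lemma supportedOn_of_forall_commute_siteUnit {T : Set V} {M : Op d}
    (hM : ∀ x ∉ T, ∀ a b, Commute M (siteUnit d x a b)) : SupportedOn d T M := by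
  rcases isEmpty_or_nonempty (Cfg d) with hempty | ⟨⟨c⟩⟩
  · exact ⟨0, fun f => isEmptyElim f⟩
  let extend (u : ∀ i : T, Fin (d i.1)) : Cfg d := fun i => if h : i ∈ T then u ⟨i, h⟩ else c i
  have extend_restrict (f : Cfg d) :
      extend (fun i => f i.1) = (Finset.univ.filter (· ∉ T)).piecewise c f := by
    funext i
    by_cases hi : i ∈ T <;> simp [extend, Finset.piecewise, hi]
  refine ⟨Matrix.of fun u v => M (extend u) (extend v), fun f g => ?_⟩
  split_ifs with hfg
  · rw [of_apply, extend_restrict, extend_restrict,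
      apply_piecewise_of_commute_siteUnit (M := M)]
    · simpa using hM
    · simpa using hfg
  · push Not at hfg
    obtain ⟨x, hxT, hne⟩ := hfg
    exact apply_eq_zero_of_commute_siteUnit (hM x hxT) hne

lemma supportedOn_iff_forall_commute_siteUnit {T : Set V} {M : Op d} :
    SupportedOn d T M ↔ ∀ x ∉ T, ∀ a b, Commute M (siteUnit d x a b) :=
  ⟨fun hM _ hx _ _ => hM.commute_of_disjoint (supportedOn_singleton_siteUnit _ _ _)
    (Set.disjoint_singleton_right.mpr hx), supportedOn_of_forall_commute_siteUnit⟩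

lemma SupportedOn.mono {S T : Set V} {M : Op d} (hM : SupportedOn d S M) (hST : S ⊆ T) :
    SupportedOn d T M :=
  supportedOn_iff_forall_commute_siteUnit.mpr fun x hx =>
    supportedOn_iff_forall_commute_siteUnit.mp hM x (fun hxS => hx (hST hxS))

lemma supportedOn_supp (M : Op d) : SupportedOn d (Supp d M) M :=
  supportedOn_iff_forall_commute_siteUnit.mpr fun x hx => by
    obtain ⟨S, hS, hxS⟩ : ∃ S, SupportedOn d S M ∧ x ∉ S := by
      simpa [Supp] using hx
    exact supportedOn_iff_forall_commute_siteUnit.mp hS x hxS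

end

lemma IsQCA.supportedOn_map {V : Type} [Fintype V] [DecidableEq V] [PseudoMetricSpace V]
    {d : V → ℕ} {R : ℝ} {α : Op d ≃ₐ[ℂ] Op d} (hα : IsQCA d R α) {S : Set V} {M : Op d}
    (hM : SupportedOn d S M) :
    SupportedOn d (⋃ y ∈ S, Metric.closedBall y R) (α M) := by
  refine supportedOn_iff_forall_commute_siteUnit.mpr fun z hz a b => ?_
  have hdisj : Disjoint S (Metric.closedBall z R) := Set.disjoint_left.mpr fun y hy hyz =>
    hz (Set.mem_iUnion₂.mpr ⟨y, hy, Metric.mem_closedBall_comm.mp hyz⟩)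
  have hcomm := hM.commute_of_disjoint
    (hα.2 z _ (supportedOn_singleton_siteUnit z a b)).2 hdisj
  simpa using hcomm.map α

/-- The image under a QCA of range `R` of an `l`-visibly simple algebra is
`(l + 2R)`-visibly simple. -/
theorem visiblySimple_image_qca {V : Type} [Fintype V] [DecidableEq V]
    [PseudoMetricSpace V] (d : V → ℕ) (R l : ℝ) (α : Op d ≃ₐ[ℂ] Op d)
    (hα : IsQCA d R α) (A : Subalgebra ℂ (Op d))
    (hA : VisiblySimple d l A) :
    VisiblySimple d (l + 2 * R) (Subalgebra.map α.toAlgHom A) := by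
  rintro _ ⟨O, hO, rfl⟩ x hx
  obtain ⟨y, hy, hxy⟩ : ∃ y ∈ Supp d O, dist x y ≤ R := by
    simpa using hx _ (hα.supportedOn_map (supportedOn_supp O))
  obtain ⟨P, hPA, hP, hOP⟩ := hA O hO y hy
  refine ⟨α P, ⟨P, hPA, rfl⟩, (hα.supportedOn_map hP).mono ?_, fun h => hOP ?_⟩
  · refine Set.iUnion₂_subset fun i hi => Metric.closedBall_subset_closedBall' ?_
    calc R + dist i x ≤ R + (dist i y + dist y x) := by gcongr; exact dist_triangle i y x
      _ ≤ R + (l + R) := by gcongr; exacts [hi, dist_comm x y ▸ hxy]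
      _ = l + 2 * R := by ring
  · exact α.injective (by simpa using h)
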